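/- For 0 < J < J_c := 1/(4(3−2√2)) and any h ∈ ℝ, the function m ↦ p̃(m,h,J) = −J m² + J/2 + p((2m−1)J+h) is strictly concave on ℝ; in particular the consistency equation m = g((2m−1)J + h) has exactly one solution. -/

import Mathlib

/-!
With `u = exp (2ξ)`, `g = gH ξ` is the root in `(0, 1)` of `g² = u (1 - g)`, so `gH` inverts
`t ↦ log t - log (1 - t) / 2`; this gives `g' = 2g(1 - g)/(2 - g) ≤ 6 - 4√2`, and `pH' = g`.
Hence `∂ₘ p̃ = 2J (g((2m-1)J + h) - m)`, and for `J < J_c` the bracket has slope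
`2J g' - 1 < 0`. A strictly decreasing derivative gives strict concavity, and the bracket,
positive at `m = 0` and negative at `m = 1`, vanishes exactly once.
-/

noncomputable def gH (h : ℝ) : ℝ :=
  (Real.sqrt (Real.exp (4 * h) + 4 * Real.exp (2 * h)) - Real.exp (2 * h)) / 2

noncomputable def pH (h : ℝ) : ℝ :=
  -(1 - gH h) / 2 - (1 / 2) * Real.log (1 - gH h)

noncomputable def pTilde (m h J : ℝ) : ℝ :=
  -J * m ^ 2 + J / 2 + pH ((2 * m - 1) * J + h)

open Real

lemma gH_eq_sqrt_sub (ξ : ℝ) :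
    gH ξ = (√(exp (2 * ξ) ^ 2 + 4 * exp (2 * ξ)) - exp (2 * ξ)) / 2 := by
  rw [gH, sq, ← exp_add]; ring_nf

lemma gH_sq (ξ : ℝ) : gH ξ ^ 2 = exp (2 * ξ) * (1 - gH ξ) := by
  have hs := sq_sqrt (by positivity : 0 ≤ exp (2 * ξ) ^ 2 + 4 * exp (2 * ξ))
  rw [gH_eq_sqrt_sub]
  linear_combination hs / 4

lemma gH_pos (ξ : ℝ) : 0 < gH ξ := by
  rw [gH_eq_sqrt_sub, div_pos_iff_of_pos_right two_pos, sub_pos]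
  exact lt_sqrt_of_sq_lt (by linarith [exp_pos (2 * ξ)])

lemma gH_lt_one (ξ : ℝ) : gH ξ < 1 := by
  nlinarith [gH_sq ξ, exp_pos (2 * ξ), gH_pos ξ]

lemma continuous_gH : Continuous gH := by
  unfold gH; fun_prop

lemma log_gH_sub_log_one_sub_gH (ξ : ℝ) : log (gH ξ) - log (1 - gH ξ) / 2 = ξ := by
  have h1 : 0 < 1 - gH ξ := sub_pos.2 (gH_lt_one ξ)
  have := congrArg log (gH_sq ξ)
  rw [log_pow, log_mul (exp_pos _).ne' h1.ne', log_exp] at this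
  push_cast at this
  linarith

lemma hasDerivAt_gH (ξ : ℝ) :
    HasDerivAt gH (2 * gH ξ * (1 - gH ξ) / (2 - gH ξ)) ξ := by
  have ht0 : 0 < gH ξ := gH_pos ξ
  have ht1 : 0 < 1 - gH ξ := sub_pos.2 (gH_lt_one ξ)
  have hψ : HasDerivAt (fun s => log s - log (1 - s) / 2)
      (1 / gH ξ + 1 / (2 * (1 - gH ξ))) (gH ξ) :=
    ((hasDerivAt_log ht0.ne').sub ((((hasDerivAt_id' (gH ξ)).const_sub 1).log
      ht1.ne').div_const 2)).congr_deriv (by field_simp; ring)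
  refine (hψ.of_local_left_inverse continuous_gH.continuousAt (by positivity)
    (.of_forall log_gH_sub_log_one_sub_gH)).congr_deriv ?_
  have : 2 - gH ξ ≠ 0 := by linarith
  field_simp
  ring

/-- The maximum is attained at `t = 2 - √2`:
`(6 - 4√2)(2 - t) - 2t(1 - t) = 2(t - (2 - √2))²`. -/
lemma two_mul_mul_one_sub_div_le {t : ℝ} (ht : t < 2) :
    2 * t * (1 - t) / (2 - t) ≤ 6 - 4 * √2 := by
  have h2 : √2 ^ 2 = 2 := sq_sqrt zero_le_two
  rw [div_le_iff₀ (sub_pos.2 ht)]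
  nlinarith [sq_nonneg (t - (2 - √2))]

lemma hasDerivAt_pH (ξ : ℝ) : HasDerivAt pH (gH ξ) ξ := by
  have ht1 : 0 < 1 - gH ξ := sub_pos.2 (gH_lt_one ξ)
  have h2 : 2 - gH ξ ≠ 0 := by linarith
  have h1 := (hasDerivAt_gH ξ).const_sub 1
  refine ((h1.neg.div_const 2).sub ((h1.log ht1.ne').const_mul (1 / 2))).congr_deriv ?_
  field_simp
  ring

lemma hasDerivAt_two_mul_sub_one_mul_add (h J m : ℝ) :
    HasDerivAt (fun m : ℝ => (2 * m - 1) * J + h) (2 * J) m := by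
  simpa using ((((hasDerivAt_id m).const_mul 2).sub_const 1).mul_const J).add_const h

lemma hasDerivAt_pTilde (h J m : ℝ) :
    HasDerivAt (fun m => pTilde m h J) (2 * J * (gH ((2 * m - 1) * J + h) - m)) m :=
  ((((hasDerivAt_pow 2 m).const_mul (-J)).add_const (J / 2)).add
    ((hasDerivAt_pH _).comp m (hasDerivAt_two_mul_sub_one_mul_add h J m))).congr_deriv (by ring)

lemma strictAnti_gH_affine_sub (h : ℝ) {J : ℝ} (hJ : J < 1 / (4 * (3 - 2 * √2))) :
    StrictAnti fun m => gH ((2 * m - 1) * J + h) - m := by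
  have hJc : J * (4 * (3 - 2 * √2)) < 1 := by
    have : √2 < 3 / 2 := by rw [sqrt_lt' (by norm_num)]; norm_num
    rwa [lt_div_iff₀ (by linarith)] at hJ
  refine strictAnti_of_hasDerivAt_neg (fun m => ((hasDerivAt_gH _).comp m
    (hasDerivAt_two_mul_sub_one_mul_add h J m)).sub (hasDerivAt_id m)) fun m => ?_
  set t := gH ((2 * m - 1) * J + h)
  have ht0 : 0 < t := gH_pos _
  have ht1 : t < 1 := gH_lt_one _
  have hle := two_mul_mul_one_sub_div_le (t := t) (by linarith)
  have hpos : 0 ≤ 2 * t * (1 - t) / (2 - t) := by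
    apply div_nonneg <;> nlinarith
  rcases le_or_gt J 0 with hJ0 | hJ0 <;> nlinarith

lemma existsUnique_eq_gH (h : ℝ) {J : ℝ} (hJ : J < 1 / (4 * (3 - 2 * √2))) :
    ∃! m : ℝ, m = gH ((2 * m - 1) * J + h) := by
  have hφ : Continuous fun m : ℝ => gH ((2 * m - 1) * J + h) - m := by
    have := continuous_gH; fun_prop
  obtain ⟨m, -, hm⟩ := intermediate_value_Icc' zero_le_one hφ.continuousOn
    (show (0 : ℝ) ∈ Set.Icc _ _ from ⟨by linarith [gH_lt_one ((2 * 1 - 1) * J + h)],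
      by linarith [gH_pos ((2 * 0 - 1) * J + h)]⟩)
  refine ⟨m, (sub_eq_zero.1 hm).symm, fun y hy => ?_⟩
  exact (strictAnti_gH_affine_sub h hJ).injective (by simp only [← hy, ← hm, sub_self])

/-- for `0 < J < J_c = 1/(4(3−2√2))` and any `h`, `m ↦ p̃(m,h,J)` is
strictly concave on `ℝ`; in particular `m = g((2m−1)J + h)` has exactly one solution. -/
theorem stmt15 (h J : ℝ) (hJ0 : 0 < J) (hJ : J < 1 / (4 * (3 - 2 * Real.sqrt 2))) :
    StrictConcaveOn ℝ Set.univ (fun m : ℝ => pTilde m h J) ∧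
    ∃! m : ℝ, m = gH ((2 * m - 1) * J + h) := by
  refine ⟨StrictAnti.strictConcaveOn_univ_of_deriv ?_ ?_, existsUnique_eq_gH h hJ⟩
  · exact continuous_iff_continuousAt.2 fun m => (hasDerivAt_pTilde h J m).continuousAt
  · rw [funext fun m => (hasDerivAt_pTilde h J m).deriv]
    exact (strictAnti_gH_affine_sub h hJ).const_mul (mul_pos two_pos hJ0)
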